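/- arXiv:1009.0790 — 8 statements merged into one kernel-verified Lean document; each statement's English description precedes it below -/
import Mathlib

section
/- Assume r' ≥ r, μ = 0, and W ≠ ∅, and let I = [max(r_z−r+1, 0), p−r]. Then the Patil generating set Ω = {ξ_{i,j} : 1 ≤ i ≤ j ≤ p−1} ∪ {θ} ∪ {φ_i : i ∈ I} ∪ {ψ_j : j ∈ J} is not a Gröbner basis of P with respect to the grevlex order with grading wt(x_i) = m_i and x_0 < x_1 < ⋯ < x_n: there exists a nonzero f ∈ P (for instance f = φ_0 = x_r·x_p^q − x_0^{λ−1}·x_0·x_n^w) such that LM(f) is divisible by LM(g) for no g ∈ Ω. -/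
open MvPolynomial

noncomputable section

/-- The `i`-th variable index, clamped into `Fin (n+1)` (it equals `i` whenever `i ≤ n`). -/
def vr (n i : ℕ) : Fin (n + 1) := ⟨i % (n + 1), Nat.mod_lt i (Nat.succ_pos n)⟩

/-- The weight of an exponent vector under the grading `wt (x i) = m i`. -/
def wtv (n : ℕ) (m : ℕ → ℕ) (a : Fin (n + 1) →₀ ℕ) : ℕ :=
  ∑ i : Fin (n + 1), m i.val * a i

/-- Grevlex with grading `wt (x i) = m i` and `x_0 < x_1 < ⋯ < x_n` :  `x^a > x^b` iff the
weight of `a` is bigger, or the weights agree and the leftmost nonzero entry of `a - b`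
is negative. -/
def GrevGt (n : ℕ) (m : ℕ → ℕ) (a b : Fin (n + 1) →₀ ℕ) : Prop :=
  wtv n m b < wtv n m a ∨
    (wtv n m a = wtv n m b ∧
      ∃ i : Fin (n + 1), a i < b i ∧ ∀ j : Fin (n + 1), j < i → a j = b j)

variable {K : Type*} [Field K]

/-- `d` is the exponent vector of the leading monomial of `f` w.r.t. the order `gt`. -/
def IsLM (n : ℕ) (gt : (Fin (n + 1) →₀ ℕ) → (Fin (n + 1) →₀ ℕ) → Prop)
    (f : MvPolynomial (Fin (n + 1)) K) (d : Fin (n + 1) →₀ ℕ) : Prop :=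
  d ∈ f.support ∧ ∀ e ∈ f.support, e ≠ d → gt d e

/-- `G` is a Gröbner basis of `P` with respect to the monomial order `gt` :  `G ⊆ P`, every
element of `G` is nonzero, and for every nonzero `f ∈ P` there is a `g ∈ G` whose leading
monomial divides the leading monomial of `f`. -/
def IsGB (n : ℕ) (gt : (Fin (n + 1) →₀ ℕ) → (Fin (n + 1) →₀ ℕ) → Prop)
    (P : Ideal (MvPolynomial (Fin (n + 1)) K))
    (G : Set (MvPolynomial (Fin (n + 1)) K)) : Prop :=
  G ⊆ (P : Set (MvPolynomial (Fin (n + 1)) K)) ∧ (∀ g ∈ G, g ≠ 0) ∧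
    ∀ f ∈ P, f ≠ 0 → ∃ g ∈ G, ∃ dg df, IsLM n gt g dg ∧ IsLM n gt f df ∧ dg ≤ df

-- helpers
theorem vr_eq (n k : ℕ) (h : k ≤ n) : vr n k = ⟨k, by omega⟩ :=
  Fin.ext (Nat.mod_eq_of_lt (by omega))

theorem wtv_add (n : ℕ) (m : ℕ → ℕ) (a b : Fin (n+1) →₀ ℕ) :
    wtv n m (a + b) = wtv n m a + wtv n m b := by
  simp [wtv, Finsupp.add_apply, mul_add, Finset.sum_add_distrib]

theorem wtv_single (n : ℕ) (m : ℕ → ℕ) (i : Fin (n+1)) (c : ℕ) :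
    wtv n m (Finsupp.single i c) = m i.val * c := by
  simp [wtv, Finsupp.single_apply, mul_ite]

theorem single_mk_apply (n a b : ℕ) (ha : a < n+1) (hb : b < n+1) (c : ℕ) :
    (Finsupp.single (⟨a, ha⟩ : Fin (n+1)) c) ⟨b, hb⟩ = if a = b then c else 0 := by
  simp [Finsupp.single_apply, Fin.ext_iff]

theorem grev_asymm (n : ℕ) (m : ℕ → ℕ) {a b : Fin (n+1) →₀ ℕ}
    (h1 : GrevGt n m a b) (h2 : GrevGt n m b a) : False := by
  rcases h1 with h1 | ⟨hw1, i, hi, hji⟩ <;> rcases h2 with h2 | ⟨hw2, i', hi', hji'⟩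
  · omega
  · omega
  · omega
  · rcases lt_trichotomy i i' with h | h | h
    · exact hi.ne' (hji' i h)
    · subst h; omega
    · exact hi'.ne' (hji i' h)

theorem isLM_unique (n : ℕ) (m : ℕ → ℕ) {f : MvPolynomial (Fin (n+1)) K} {d1 d2}
    (h1 : IsLM n (GrevGt n m) f d1) (h2 : IsLM n (GrevGt n m) f d2) : d1 = d2 := by
  by_contra hne
  exact grev_asymm n m (h1.2 d2 h2.1 (Ne.symm hne)) (h2.2 d1 h1.1 hne)

theorem binom_support {n : ℕ} (A B : Fin (n+1) →₀ ℕ) (hAB : A ≠ B) :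
    (monomial A (1:K) - monomial B 1).support = {A, B} := by
  ext e
  simp only [mem_support_iff, coeff_sub, coeff_monomial, Finset.mem_insert,
    Finset.mem_singleton]
  split_ifs with h1 h2 h3
  · exact absurd (h1.trans h2.symm) hAB
  · simp [h1.symm]
  · simp [h3.symm]
  · simp only [sub_zero, ne_eq, not_true_eq_false, false_iff]
    push_neg
    exact ⟨fun h => h1 h.symm, fun h => h3 h.symm⟩

theorem binom_ne {n : ℕ} (A B : Fin (n+1) →₀ ℕ) (hAB : A ≠ B) :
    monomial A (1:K) - monomial B 1 ≠ 0 := by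
  intro h
  have := binom_support (K := K) A B hAB
  rw [h] at this
  simp at this
  exact (Finset.insert_ne_empty A {B}) this.symm

theorem binom_isLM {n : ℕ} (m : ℕ → ℕ) (A B : Fin (n+1) →₀ ℕ) (hAB : A ≠ B)
    (hgt : GrevGt n m A B) :
    IsLM n (GrevGt n m) (monomial A (1:K) - monomial B 1) A := by
  constructor
  · rw [binom_support A B hAB]; simp
  · intro e he hne
    rw [binom_support A B hAB] at he
    rcases Finset.mem_insert.mp he with h | h
    · exact absurd h hne
    · rw [Finset.mem_singleton.mp h]; exact hgt

theorem binom_lm_eq {n : ℕ} (m : ℕ → ℕ) (A B dg : Fin (n+1) →₀ ℕ) (hAB : A ≠ B)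
    (hgt : GrevGt n m A B)
    (h : IsLM n (GrevGt n m) (monomial A (1:K) - monomial B 1) dg) : dg = A := by
  have hsup := h.1
  rw [binom_support A B hAB] at hsup
  rcases Finset.mem_insert.mp hsup with h' | h'
  · exact h'
  · exfalso
    rw [Finset.mem_singleton] at h'
    have hBA := h.2 A (by rw [binom_support A B hAB]; simp) (by rw [h']; exact hAB)
    rw [h'] at hBA
    exact grev_asymm n m hgt hBA

theorem aeval_mono {n : ℕ} (m : ℕ → ℕ) (s : Fin (n+1) →₀ ℕ) :
    (Finsupp.prod s fun i e => ((Polynomial.X : Polynomial K) ^ m i.val) ^ e) =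
      Polynomial.X ^ wtv n m s := by
  rw [Finsupp.prod]
  simp_rw [← pow_mul]
  rw [Finset.prod_pow_eq_pow_sum]
  congr 1
  rw [wtv]
  exact Finset.sum_subset (Finset.subset_univ _)
    (fun i _ hi => by rw [Finsupp.notMem_support_iff.mp hi, mul_zero])

theorem binom_mem {n : ℕ} (m : ℕ → ℕ) (A B : Fin (n+1) →₀ ℕ)
    (hw : wtv n m A = wtv n m B) :
    monomial A (1:K) - monomial B 1 ∈ RingHom.ker
      (MvPolynomial.aeval (fun i : Fin (n + 1) => (Polynomial.X : Polynomial K) ^ m i.val) :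
        MvPolynomial (Fin (n + 1)) K →ₐ[K] Polynomial K) := by
  rw [RingHom.mem_ker]
  rw [map_sub, aeval_monomial, aeval_monomial, aeval_mono m A, aeval_mono m B, hw]
  simp

theorem X_as_monomial {n : ℕ} (s : Fin (n+1)) :
    (X s : MvPolynomial (Fin (n+1)) K) = monomial (Finsupp.single s 1) 1 := by
  rw [← pow_one (X s), X_pow_eq_monomial]

theorem binom_key {n : ℕ} (m : ℕ → ℕ) (A B df : Fin (n+1) →₀ ℕ)
    (hw : wtv n m A = wtv n m B)
    (i0 : Fin (n+1)) (h1 : A i0 < B i0) (h2 : ∀ j : Fin (n+1), j < i0 → A j = B j)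
    (hnle : ¬ A ≤ df) :
    ∀ dg, IsLM n (GrevGt n m) (monomial A (1:K) - monomial B 1) dg → ¬ dg ≤ df := by
  have hAB : A ≠ B := fun h => by rw [h] at h1; omega
  have hgt : GrevGt n m A B := Or.inr ⟨hw, i0, h1, h2⟩
  intro dg hdg hle
  rw [binom_lm_eq m A B dg hAB hgt hdg] at hle
  exact hnle hle



section shapes
variable {K : Type*} [Field K] {n : ℕ}
open Finsupp

theorem shape1 (a b : Fin (n+1)) (e : ℕ) :
    (X a * X b ^ e : MvPolynomial (Fin (n+1)) K) =
      monomial (Finsupp.single a 1 + Finsupp.single b e) 1 := by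
  rw [X_pow_eq_monomial, X_as_monomial, monomial_mul, one_mul]

theorem shape2 (a b c : Fin (n+1)) (l e : ℕ) :
    (X a ^ l * X b * X c ^ e : MvPolynomial (Fin (n+1)) K) =
      monomial (Finsupp.single a l + Finsupp.single b 1 + Finsupp.single c e) 1 := by
  rw [X_pow_eq_monomial, X_pow_eq_monomial, X_as_monomial, monomial_mul, monomial_mul,
    one_mul, one_mul]

theorem shape3 (a b c : Fin (n+1)) (e1 e2 : ℕ) :
    (X a * X b ^ e1 * X c ^ e2 : MvPolynomial (Fin (n+1)) K) =
      monomial (Finsupp.single a 1 + Finsupp.single b e1 + Finsupp.single c e2) 1 := by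
  rw [X_pow_eq_monomial, X_pow_eq_monomial, X_as_monomial, monomial_mul, monomial_mul,
    one_mul, one_mul]

theorem shape4 (a b : Fin (n+1)) (l : ℕ) :
    (X a ^ l * X b : MvPolynomial (Fin (n+1)) K) =
      monomial (Finsupp.single a l + Finsupp.single b 1) 1 := by
  rw [X_pow_eq_monomial, X_as_monomial, monomial_mul, one_mul]

theorem shape7 (a b : Fin (n+1)) :
    (X a * X b : MvPolynomial (Fin (n+1)) K) =
      monomial (Finsupp.single a 1 + Finsupp.single b 1) 1 := by
  rw [X_as_monomial, X_as_monomial, monomial_mul, one_mul]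

end shapes


set_option maxHeartbeats 2000000 in
theorem stmt_4
    -- the almost arithmetic sequence
    (n p : ℕ) (hn : 2 ≤ n) (hp : p = n - 1)
    (m : ℕ → ℕ) (hmpos : ∀ i ≤ n, 0 < m i)
    (dst : ℕ) (hdst : 0 < dst)
    (harith : ∀ i ≤ p, m i = m 0 + i * dst)
    (hgcd : (Finset.range (n + 1)).gcd m = 1)
    -- the numerical semigroups Γ and Γ'
    (Γ Γ' : Set ℕ)
    (hΓ : Γ = {γ | ∃ c : ℕ → ℕ, γ = ∑ i ∈ Finset.range (n + 1), c i * m i})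
    (hΓ' : Γ' = {γ | ∃ c : ℕ → ℕ, γ = ∑ i ∈ Finset.range (p + 1), c i * m i})
    -- Γ is minimally generated by m_0, …, m_n
    (hmin : ∀ i ≤ n, ¬∃ c : ℕ → ℕ, c i = 0 ∧ m i = ∑ j ∈ Finset.range (n + 1), c j * m j)
    -- u = min{t ≥ 0 : g_t − m_0 ∈ Γ}, with u = q·p + r, 1 ≤ r ≤ p, g_u = q·m_p + m_r
    (u q r : ℕ) (hu : u = q * p + r) (hr1 : 1 ≤ r) (hrp : r ≤ p)
    (humem : ∃ γ ∈ Γ, q * m p + m r = γ + m 0)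
    (humin : ∀ t qt rt : ℕ, t < u → t = qt * p + rt → 1 ≤ rt → rt ≤ p →
        ¬∃ γ ∈ Γ, qt * m p + m rt = γ + m 0)
    -- υ = min{b ≥ 1 : b·m_n ∈ Γ'}
    (v : ℕ) (hv1 : 1 ≤ v) (hvmem : v * m n ∈ Γ')
    (hvmin : ∀ b : ℕ, 1 ≤ b → b < v → b * m n ∉ Γ')
    -- the Patil–Singh parameters w, z, λ, μ, ν
    (w z lam mu nu : ℕ) (hwv : w < v) (hzu : z < u) (hlam : 1 ≤ lam) (hnu : 2 ≤ nu)
    -- u − z = q'·p + r' with 1 ≤ r' ≤ p, and z = q_z·p + r_z with q_z ∈ ℤ, 1 ≤ r_z ≤ p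
    (q' r' : ℕ) (huz : u - z = q' * p + r') (hr'1 : 1 ≤ r') (hr'p : r' ≤ p)
    (qz : ℤ) (rz : ℕ) (hz : (z : ℤ) = qz * p + rz) (hrz1 : 1 ≤ rz) (hrzp : rz ≤ p)
    -- the defining equations g_u = λ·m_0 + w·m_n, υ·m_n = μ·m_0 + g_z,
    -- g_{u−z} + (υ−w)·m_n = ν·m_0
    (heq1 : q * m p + m r = lam * m 0 + w * m n)
    (heq2 : (v : ℤ) * m n = mu * m 0 + (qz * m p + m rz))
    (heq3 : (q' * m p + m r') + (v - w) * m n = nu * m 0)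
    -- the assumptions of the remark: r' ≥ r, μ = 0, and W ≠ ∅
    (hr'r : r ≤ r') (hmu : mu = 0) (hW : 1 ≤ z ∧ 1 ≤ w)
    -- the toric ideal P = ker η, η(x_i) = t^{m_i}
    (P : Ideal (MvPolynomial (Fin (n + 1)) K))
    (hP : P = RingHom.ker
        (MvPolynomial.aeval (fun i : Fin (n + 1) => (Polynomial.X : Polynomial K) ^ m i.val) :
          MvPolynomial (Fin (n + 1)) K →ₐ[K] Polynomial K))
    -- the Patil generating set Ω = {ξ_{i,j}} ∪ {θ} ∪ {φ_i : i ∈ I} ∪ {ψ_j : j ∈ J},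
    -- where I = [max(r_z−r+1,0), p−r] and J = [0, min(z−1, p−r')] (here W ≠ ∅)
    (G : Set (MvPolynomial (Fin (n + 1)) K))
    (hG : G =
      {f | ∃ i : ℕ, (rz + 1 - r ≤ i ∧ i ≤ p - r) ∧ f =
          X (vr n (r + i)) * X (vr n p) ^ q -
            X (vr n 0) ^ (lam - 1) * X (vr n i) * X (vr n n) ^ w} ∪
      {f | ∃ j : ℕ, ((1 ≤ z ∧ 1 ≤ w) ∧ j ≤ min (z - 1) (p - r')) ∧ f =
          X (vr n (r' + j)) * X (vr n p) ^ q' * X (vr n n) ^ (v - w) -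
            X (vr n 0) ^ (nu - 1) * X (vr n j)} ∪
      {X (vr n n) ^ v - X (vr n 0) ^ mu * X (vr n rz) * X (vr n p) ^ qz.toNat} ∪
      {f | ∃ i j : ℕ, 1 ≤ i ∧ i ≤ j ∧ j ≤ p - 1 ∧ f =
          (if i + j ≤ p then X (vr n i) * X (vr n j) - X (vr n 0) * X (vr n (i + j))
           else X (vr n i) * X (vr n j) - X (vr n (i + j - p)) * X (vr n p))}) :
    -- Ω is not a Gröbner basis of P : there is a nonzero f ∈ P whose leading monomial
    -- is divisible by the leading monomial of no element of Ω
    ¬ IsGB n (GrevGt n m) P G ∧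
      ∃ f ∈ P, f ≠ 0 ∧ ∃ df, IsLM n (GrevGt n m) f df ∧
        ∀ g ∈ G, ∀ dg, IsLM n (GrevGt n m) g dg → ¬ dg ≤ df := by
  obtain ⟨hz1, hw1⟩ := hW
  obtain ⟨lam1, rfl⟩ : ∃ l, lam = l + 1 := ⟨lam - 1, by omega⟩
  obtain ⟨nu1, rfl⟩ : ∃ t, nu = t + 1 := ⟨nu - 1, by omega⟩
  have hnu1 : 1 ≤ nu1 := by omega
  have hp1 : 1 ≤ p := by omega
  have hpn : p < n := by omega
  have hqz0 : 0 ≤ qz := by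
    by_contra hcon
    push_neg at hcon
    have h1 : qz ≤ -1 := by omega
    have h2 : qz * (p:ℤ) ≤ -1 * p := mul_le_mul_of_nonneg_right h1 (by positivity)
    have h3 : (1:ℤ) ≤ (z:ℤ) := by exact_mod_cast hz1
    have h4 : (rz:ℤ) ≤ (p:ℤ) := by exact_mod_cast hrzp
    linarith [hz]
  have hu' : (u:ℤ) = q * p + r := by exact_mod_cast hu
  have huz2 : u = z + (q' * p + r') := by
    generalize hgen : q' * p = a at huz
    omega
  have huz' : (u:ℤ) = z + ((q':ℤ) * p + r') := by exact_mod_cast huz2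
  have hD : ((q:ℤ) - qz - q') * p = (rz:ℤ) + r' - r := by linear_combination huz' + hz - hu'
  have hD1 : (1:ℤ) ≤ (q:ℤ) - qz - q' := by
    by_contra hcon
    push_neg at hcon
    have h1 : (q:ℤ) - qz - q' ≤ 0 := by omega
    have h2 : ((q:ℤ) - qz - q') * p ≤ 0 :=
      mul_nonpos_of_nonpos_of_nonneg h1 (by positivity)
    have h3 : (1:ℤ) ≤ (rz:ℤ) := by exact_mod_cast hrz1
    have h4 : (r:ℤ) ≤ (r':ℤ) := by exact_mod_cast hr'r
    linarith
  have hrzr : r ≤ rz := by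
    have h2 : (p:ℤ) ≤ ((q:ℤ) - qz - q') * p :=
      le_mul_of_one_le_left (by positivity) hD1
    have h4 : (r':ℤ) ≤ (p:ℤ) := by exact_mod_cast hr'p
    have h5 : (r:ℤ) ≤ (rz:ℤ) := by linarith
    exact_mod_cast h5
  have hQ : ((qz.toNat : ℕ) : ℤ) = qz := Int.toNat_of_nonneg hqz0
  have hθw : v * m n = qz.toNat * m p + m rz := by
    have h := heq2
    rw [hmu] at h
    push_cast at h
    have h2 : ((v * m n : ℕ) : ℤ) = ((qz.toNat * m p + m rz : ℕ) : ℤ) := by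
      push_cast [hQ]
      linarith
    exact_mod_cast h2
  have hr_lt : r < n + 1 := by omega
  have hp_lt : p < n + 1 := by omega
  have h0_lt : 0 < n + 1 := by omega
  have hn_lt : n < n + 1 := by omega
  set Af : Fin (n+1) →₀ ℕ :=
    Finsupp.single ⟨r, hr_lt⟩ 1 + Finsupp.single ⟨p, hp_lt⟩ q with hAf
  set Bf : Fin (n+1) →₀ ℕ :=
    Finsupp.single ⟨0, h0_lt⟩ (lam1+1) + Finsupp.single ⟨n, hn_lt⟩ w with hBf
  have hwf : wtv n m Af = wtv n m Bf := by
    rw [hAf, hBf]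
    simp only [wtv_add, wtv_single, Fin.val_mk]
    linarith [heq1]
  have hABf : Af ≠ Bf := by
    intro h
    have h0 : Af ⟨0, h0_lt⟩ = Bf ⟨0, h0_lt⟩ := by rw [h]
    rw [hAf, hBf] at h0
    simp only [Finsupp.add_apply, single_mk_apply] at h0
    split_ifs at h0 <;> omega
  have hgtf : GrevGt n m Af Bf := by
    refine Or.inr ⟨hwf, ⟨0, h0_lt⟩, ?_, ?_⟩
    · rw [hAf, hBf]
      simp only [Finsupp.add_apply, single_mk_apply]
      split_ifs <;> omega
    · intro jj hjj
      have hjv : (jj : ℕ) < 0 := hjj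
      omega
  have key : ∀ g ∈ G, ∀ dg, IsLM n (GrevGt n m) g dg → ¬ dg ≤ Af := by
    intro g hg
    rw [hG] at hg
    simp only [Set.mem_union, Set.mem_setOf_eq, Set.mem_singleton_iff] at hg
    rcases hg with ((⟨i, ⟨hil, hiu⟩, hgeq⟩ | ⟨j, ⟨-, hju⟩, hgeq⟩) | hgeq) |
      ⟨i, j, hi1, hij, hjp, hgeq⟩
    · -- φ_i
      have hi1 : 1 ≤ i := by omega
      have hrip : r + i ≤ p := by omega
      simp only [Nat.add_sub_cancel] at hgeq
      rw [vr_eq n (r+i) (by omega), vr_eq n p (by omega), vr_eq n 0 (by omega),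
        vr_eq n i (by omega), vr_eq n n (by omega)] at hgeq
      rw [shape1, shape2] at hgeq
      rw [hgeq]
      have hwφ : wtv n m (Finsupp.single (⟨r+i, by omega⟩ : Fin (n+1)) 1 +
            Finsupp.single ⟨p, hp_lt⟩ q) =
          wtv n m (Finsupp.single ⟨0, h0_lt⟩ lam1 +
            Finsupp.single (⟨i, by omega⟩ : Fin (n+1)) 1 + Finsupp.single ⟨n, hn_lt⟩ w) := by
        simp only [wtv_add, wtv_single, Fin.val_mk]
        have ha := harith (r+i) (by omega)
        have hb := harith i (by omega)
        have hc := harith r (by omega)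
        linarith [heq1, ha, hb, hc]
      have hnleφ : ¬ (Finsupp.single (⟨r+i, by omega⟩ : Fin (n+1)) 1 +
            Finsupp.single ⟨p, hp_lt⟩ q) ≤ Af := by
        intro hle
        have e1 := Finsupp.le_def.mp hle ⟨r+i, by omega⟩
        rw [hAf] at e1
        simp only [Finsupp.add_apply, single_mk_apply] at e1
        split_ifs at e1 <;> omega
      rcases Nat.eq_zero_or_pos lam1 with hl | hl
      · refine binom_key m _ _ Af hwφ ⟨i, by omega⟩ ?_ ?_ hnleφ
        · simp only [Finsupp.add_apply, single_mk_apply]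
          split_ifs <;> omega
        · intro jj hjj
          have hjv : (jj : ℕ) < i := hjj
          simp only [Finsupp.add_apply, Finsupp.single_apply, Fin.ext_iff, Fin.val_mk]
          split_ifs <;> omega
      · refine binom_key m _ _ Af hwφ ⟨0, h0_lt⟩ ?_ ?_ hnleφ
        · simp only [Finsupp.add_apply, single_mk_apply]
          split_ifs <;> omega
        · intro jj hjj
          have hjv : (jj : ℕ) < 0 := hjj
          omega
    · -- ψ_j
      have hjr' : r' + j ≤ p := by omega
      simp only [Nat.add_sub_cancel] at hgeq
      rw [vr_eq n (r'+j) (by omega), vr_eq n p (by omega), vr_eq n n (by omega),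
        vr_eq n 0 (by omega), vr_eq n j (by omega)] at hgeq
      rw [shape3, shape4] at hgeq
      rw [hgeq]
      refine binom_key m _ _ Af ?_ ⟨0, h0_lt⟩ ?_ ?_ ?_
      · simp only [wtv_add, wtv_single, Fin.val_mk]
        have ha := harith (r'+j) (by omega)
        have hb := harith r' (by omega)
        have hc := harith j (by omega)
        linarith [heq3, ha, hb, hc]
      · simp only [Finsupp.add_apply, single_mk_apply]
        split_ifs <;> omega
      · intro jj hjj
        have hjv : (jj : ℕ) < 0 := hjj
        omega
      · intro hle
        have e1 := Finsupp.le_def.mp hle ⟨n, hn_lt⟩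
        rw [hAf] at e1
        simp only [Finsupp.add_apply, single_mk_apply] at e1
        split_ifs at e1 <;> omega
    · -- θ
      rw [hmu] at hgeq
      simp only [pow_zero, one_mul] at hgeq
      rw [vr_eq n n (by omega), vr_eq n rz (by omega), vr_eq n p (by omega)] at hgeq
      rw [X_pow_eq_monomial, shape1] at hgeq
      rw [hgeq]
      refine binom_key m _ _ Af ?_ ⟨rz, by omega⟩ ?_ ?_ ?_
      · simp only [wtv_add, wtv_single, Fin.val_mk]
        linarith [hθw]
      · simp only [Finsupp.add_apply, single_mk_apply]
        split_ifs <;> omega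
      · intro jj hjj
        have hjv : (jj : ℕ) < rz := hjj
        simp only [Finsupp.add_apply, Finsupp.single_apply, Fin.ext_iff, Fin.val_mk]
        split_ifs <;> omega
      · intro hle
        have e1 := Finsupp.le_def.mp hle ⟨n, hn_lt⟩
        rw [hAf] at e1
        simp only [Finsupp.add_apply, single_mk_apply] at e1
        split_ifs at e1 <;> omega
    · -- ξ_{i,j}
      by_cases hcase : i + j ≤ p
      · rw [if_pos hcase] at hgeq
        rw [vr_eq n i (by omega), vr_eq n j (by omega), vr_eq n 0 (by omega),
          vr_eq n (i+j) (by omega)] at hgeq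
        rw [shape7, shape7] at hgeq
        rw [hgeq]
        refine binom_key m _ _ Af ?_ ⟨0, h0_lt⟩ ?_ ?_ ?_
        · simp only [wtv_add, wtv_single, Fin.val_mk]
          have ha := harith i (by omega)
          have hb := harith j (by omega)
          have hc := harith (i+j) (by omega)
          linarith [ha, hb, hc]
        · simp only [Finsupp.add_apply, single_mk_apply]
          split_ifs <;> omega
        · intro jj hjj
          have hjv : (jj : ℕ) < 0 := hjj
          omega
        · intro hle
          have e1 := Finsupp.le_def.mp hle ⟨i, by omega⟩
          have e2 := Finsupp.le_def.mp hle ⟨j, by omega⟩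
          rw [hAf] at e1 e2
          simp only [Finsupp.add_apply, single_mk_apply] at e1 e2
          split_ifs at e1 e2 <;> omega
      · rw [if_neg hcase] at hgeq
        obtain ⟨kk, hkk⟩ : ∃ kk, i + j = p + kk := ⟨i + j - p, by omega⟩
        have hijp : i + j - p = kk := by omega
        rw [hijp] at hgeq
        have hkk1 : 1 ≤ kk := by omega
        have hkki : kk + 1 ≤ i := by omega
        rw [vr_eq n i (by omega), vr_eq n j (by omega), vr_eq n kk (by omega),
          vr_eq n p (by omega)] at hgeq
        rw [shape7, shape7] at hgeq
        rw [hgeq]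
        refine binom_key m _ _ Af ?_ ⟨kk, by omega⟩ ?_ ?_ ?_
        · simp only [wtv_add, wtv_single, Fin.val_mk]
          have ha := harith i (by omega)
          have hb := harith j (by omega)
          have hc := harith kk (by omega)
          have hd := harith p (by omega)
          have he : (i+j) * dst = (p+kk) * dst := by rw [hkk]
          linarith [ha, hb, hc, hd, he]
        · simp only [Finsupp.add_apply, single_mk_apply]
          split_ifs <;> omega
        · intro jj hjj
          have hjv : (jj : ℕ) < kk := hjj
          simp only [Finsupp.add_apply, Finsupp.single_apply, Fin.ext_iff, Fin.val_mk]
          split_ifs <;> omega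
        · intro hle
          have e1 := Finsupp.le_def.mp hle ⟨i, by omega⟩
          have e2 := Finsupp.le_def.mp hle ⟨j, by omega⟩
          rw [hAf] at e1 e2
          simp only [Finsupp.add_apply, single_mk_apply] at e1 e2
          split_ifs at e1 e2 <;> omega
  have hfP : (monomial Af 1 - monomial Bf 1 : MvPolynomial (Fin (n+1)) K) ∈ P := by
    rw [hP]
    exact binom_mem m Af Bf hwf
  have hfne := binom_ne (K := K) Af Bf hABf
  have hfLM := binom_isLM (K := K) m Af Bf hABf hgtf
  refine ⟨?_, monomial Af 1 - monomial Bf 1, hfP, hfne, Af, hfLM, key⟩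
  rintro ⟨-, -, hdiv⟩
  obtain ⟨g, hgG, dg, df', hgLM, hfLM', hle⟩ := hdiv _ hfP hfne
  have hdf : df' = Af := isLM_unique n m hfLM' hfLM
  rw [hdf] at hle
  exact key g hgG dg hgLM hle

end
end

section
/- Let m_0 ≥ 5 be an odd integer. Then the Patil generating set Ω = { x_1·x_2 − x_0^2 , x_2^{(m_0+1)/2} − x_1^{(m_0−1)/2} } of the toric ideal P of the sequence (m_0, m_0+1, m_0−1) is not a Gröbner basis of P with respect to the grevlex order with grading wt(x_i) = m_i and x_0 < x_1 < x_2: the binomial f = x_1^{(m_0+1)/2} − x_0^2·x_2^{(m_0−1)/2} lies in P, its leading monomial is x_1^{(m_0+1)/2}, and x_1^{(m_0+1)/2} is divisible by neither LM(x_1·x_2 − x_0^2) = x_1·x_2 nor LM(x_2^{(m_0+1)/2} − x_1^{(m_0−1)/2}) = x_2^{(m_0+1)/2}. -/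
/-!
Write `m_0 = 2c + 1`, so the weights are `(2c+1, 2c+2, 2c)`. All polynomials involved are
binomials `x^a - x^b` with coefficients `1`, so everything reduces to exponent vectors: such a
binomial lies in `P = ker η` exactly when `a` and `b` have the same weight, and grevlex then
compares `a` and `b` by their first differing coordinate. The binomial `f` has the `x_2`-free
leading monomial `x_1^{c+1}`, while both leading monomials of `Ω` contain `x_2`, so no
reduction of `f` by `Ω` is possible.
-/

open MvPolynomial

noncomputable section

/-- The weight of an exponent vector under the grading `wt (x i) = m i`. -/
def wt3 (m : Fin 3 → ℕ) (a : Fin 3 →₀ ℕ) : ℕ := ∑ i : Fin 3, m i * a i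

/-- Grevlex with grading `wt (x i) = m i` and `x_0 < x_1 < x_2` :  `x^a > x^b` iff the weight
of `a` is bigger, or the weights agree and the leftmost nonzero entry of `a - b` is
negative. -/
def GrevGt3 (m : Fin 3 → ℕ) (a b : Fin 3 →₀ ℕ) : Prop :=
  wt3 m b < wt3 m a ∨
    (wt3 m a = wt3 m b ∧ ∃ i : Fin 3, a i < b i ∧ ∀ j : Fin 3, j < i → a j = b j)

variable {K : Type*} [Field K]

/-- `d` is the exponent vector of the leading monomial of `f` w.r.t. the order `gt`. -/
def IsLM3 (gt : (Fin 3 →₀ ℕ) → (Fin 3 →₀ ℕ) → Prop)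
    (f : MvPolynomial (Fin 3) K) (d : Fin 3 →₀ ℕ) : Prop :=
  d ∈ f.support ∧ ∀ e ∈ f.support, e ≠ d → gt d e

/-- `G` is a Gröbner basis of `P` with respect to the monomial order `gt`. -/
def IsGB3 (gt : (Fin 3 →₀ ℕ) → (Fin 3 →₀ ℕ) → Prop)
    (P : Ideal (MvPolynomial (Fin 3) K)) (G : Set (MvPolynomial (Fin 3) K)) : Prop :=
  G ⊆ (P : Set (MvPolynomial (Fin 3) K)) ∧ (∀ g ∈ G, g ≠ 0) ∧
    ∀ f ∈ P, f ≠ 0 → ∃ g ∈ G, ∃ dg df, IsLM3 gt g dg ∧ IsLM3 gt f df ∧ dg ≤ df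

theorem wt3_add (m : Fin 3 → ℕ) (a b : Fin 3 →₀ ℕ) : wt3 m (a + b) = wt3 m a + wt3 m b := by
  simp only [wt3, Finsupp.add_apply, mul_add, Finset.sum_add_distrib]

theorem wt3_single (m : Fin 3 → ℕ) (i : Fin 3) (k : ℕ) : wt3 m (Finsupp.single i k) = m i * k := by
  simp [wt3, Finsupp.single_apply]

namespace GrevGt3

variable {m : Fin 3 → ℕ} {a b : Fin 3 →₀ ℕ}

theorem asymm (h : GrevGt3 m a b) : ¬ GrevGt3 m b a := by
  rintro (hw' | ⟨hw', j, hj, hj'⟩) <;> rcases h with hw | ⟨hw, i, hi, hi'⟩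
  · omega
  · omega
  · omega
  · rcases lt_trichotomy i j with h | rfl | h
    · have := hj' i h; omega
    · omega
    · have := hi' j h; omega

theorem of_apply_zero_lt (hw : wt3 m a = wt3 m b) (h0 : a 0 < b 0) : GrevGt3 m a b :=
  Or.inr ⟨hw, 0, h0, fun j hj => absurd hj (Fin.not_lt_zero j)⟩

theorem of_apply_one_lt (hw : wt3 m a = wt3 m b) (h0 : a 0 = b 0) (h1 : a 1 < b 1) :
    GrevGt3 m a b :=
  Or.inr ⟨hw, 1, h1, fun j hj => by rwa [show j = 0 by omega]⟩

end GrevGt3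

namespace IsLM3

variable {gt : (Fin 3 →₀ ℕ) → (Fin 3 →₀ ℕ) → Prop} {f : MvPolynomial (Fin 3) K}
  {d d' : Fin 3 →₀ ℕ}

theorem ne_zero (h : IsLM3 gt f d) : f ≠ 0 := by
  rintro rfl
  simp [IsLM3] at h

theorem unique (hgt : ∀ a b, gt a b → ¬ gt b a) (h : IsLM3 gt f d) (h' : IsLM3 gt f d') :
    d = d' := by
  by_contra hne
  exact hgt d d' (h.2 d' h'.1 (Ne.symm hne)) (h'.2 d h.1 hne)

end IsLM3

theorem isLM3_monomial_sub_monomial {gt : (Fin 3 →₀ ℕ) → (Fin 3 →₀ ℕ) → Prop}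
    {a b : Fin 3 →₀ ℕ} (hab : a ≠ b) (h : gt a b) :
    IsLM3 gt (monomial a (1 : K) - monomial b 1) a := by
  refine ⟨by simp [coeff_monomial, Ne.symm hab], fun e he hea => ?_⟩
  obtain rfl : e = b := by
    by_contra heb
    exact (mem_support_iff.mp he) (by simp [coeff_monomial, Ne.symm hea, Ne.symm heb])
  exact h

theorem aeval_X_pow_monomial (m : Fin 3 → ℕ) (a : Fin 3 →₀ ℕ) :
    aeval (fun i : Fin 3 => (Polynomial.X : Polynomial K) ^ m i) (monomial a (1 : K)) =
      Polynomial.X ^ wt3 m a := by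
  rw [aeval_monomial, map_one, one_mul, Finsupp.prod_fintype _ _ fun i => pow_zero _]
  simp only [← pow_mul, Finset.prod_pow_eq_pow_sum, wt3]

theorem monomial_sub_monomial_mem_ker {m : Fin 3 → ℕ} {a b : Fin 3 →₀ ℕ}
    (hw : wt3 m a = wt3 m b) :
    monomial a (1 : K) - monomial b 1 ∈ RingHom.ker
      (aeval (fun i : Fin 3 => (Polynomial.X : Polynomial K) ^ m i) :
        MvPolynomial (Fin 3) K →ₐ[K] Polynomial K) := by
  rw [RingHom.mem_ker, map_sub, aeval_X_pow_monomial, aeval_X_pow_monomial, hw, sub_self]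

theorem not_isGB3_of_not_le {gt : (Fin 3 →₀ ℕ) → (Fin 3 →₀ ℕ) → Prop}
    (hgt : ∀ a b, gt a b → ¬ gt b a) {P : Ideal (MvPolynomial (Fin 3) K)}
    {G : Set (MvPolynomial (Fin 3) K)} {f : MvPolynomial (Fin 3) K} {df : Fin 3 →₀ ℕ}
    (hf : f ∈ P) (hdf : IsLM3 gt f df) (hG : ∀ g ∈ G, ∃ dg, IsLM3 gt g dg ∧ ¬ dg ≤ df) :
    ¬ IsGB3 gt P G := by
  rintro ⟨-, -, hGB⟩
  obtain ⟨g, hg, dg, df', hdg, hdf', hle⟩ := hGB f hf hdf.ne_zero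
  obtain ⟨dg', hdg', hnle⟩ := hG g hg
  rw [hdg.unique hgt hdg', hdf'.unique hgt hdf] at hle
  exact hnle hle

section Patil

variable (c : ℕ)

theorem isLM3_X_one_pow_sub :
    IsLM3 (GrevGt3 ![2 * c + 1, 2 * c + 2, 2 * c])
      (X 1 ^ (c + 1) - X 0 ^ 2 * X 2 ^ c : MvPolynomial (Fin 3) K) (Finsupp.single 1 (c + 1)) := by
  rw [X_pow_eq_monomial, X_pow_eq_monomial, X_pow_eq_monomial, monomial_mul, one_mul]
  refine isLM3_monomial_sub_monomial (fun h => by simpa using DFunLike.congr_fun h 0)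
    (GrevGt3.of_apply_zero_lt ?_ (by simp))
  simp only [wt3_add, wt3_single, Matrix.cons_val]
  ring

theorem X_one_pow_sub_mem_ker :
    (X 1 ^ (c + 1) - X 0 ^ 2 * X 2 ^ c : MvPolynomial (Fin 3) K) ∈ RingHom.ker
      (aeval (fun i : Fin 3 => (Polynomial.X : Polynomial K) ^ ![2 * c + 1, 2 * c + 2, 2 * c] i) :
        MvPolynomial (Fin 3) K →ₐ[K] Polynomial K) := by
  rw [X_pow_eq_monomial, X_pow_eq_monomial, X_pow_eq_monomial, monomial_mul, one_mul]
  refine monomial_sub_monomial_mem_ker ?_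
  simp only [wt3_add, wt3_single, Matrix.cons_val]
  ring

theorem isLM3_X_one_mul_X_two_sub :
    IsLM3 (GrevGt3 ![2 * c + 1, 2 * c + 2, 2 * c])
      (X 1 * X 2 - X 0 ^ 2 : MvPolynomial (Fin 3) K) (Finsupp.single 1 1 + Finsupp.single 2 1) := by
  rw [X, X, X_pow_eq_monomial, monomial_mul, one_mul]
  refine isLM3_monomial_sub_monomial (fun h => by simpa using DFunLike.congr_fun h 0)
    (GrevGt3.of_apply_zero_lt ?_ (by simp))
  simp only [wt3_add, wt3_single, Matrix.cons_val]
  ring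

theorem isLM3_X_two_pow_sub (hc : 0 < c) :
    IsLM3 (GrevGt3 ![2 * c + 1, 2 * c + 2, 2 * c])
      (X 2 ^ (c + 1) - X 1 ^ c : MvPolynomial (Fin 3) K) (Finsupp.single 2 (c + 1)) := by
  rw [X_pow_eq_monomial, X_pow_eq_monomial]
  refine isLM3_monomial_sub_monomial (fun h => by simpa using DFunLike.congr_fun h 2)
    (GrevGt3.of_apply_one_lt ?_ (by simp) (by simpa using hc))
  simp only [wt3_single, Matrix.cons_val]
  ring

end Patil

theorem stmt_5 (m0 : ℕ) (h5 : 5 ≤ m0) (hodd : Odd m0)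
    -- the toric ideal P of the sequence (m_0, m_0+1, m_0−1)
    (P : Ideal (MvPolynomial (Fin 3) K))
    (hP : P = RingHom.ker
        (MvPolynomial.aeval (fun i : Fin 3 => (Polynomial.X : Polynomial K) ^ ![m0, m0 + 1, m0 - 1] i) :
          MvPolynomial (Fin 3) K →ₐ[K] Polynomial K)) :
    -- Ω = {x_1x_2 − x_0², x_2^{(m_0+1)/2} − x_1^{(m_0−1)/2}} is not a Gröbner basis of P
    ¬ IsGB3 (GrevGt3 ![m0, m0 + 1, m0 - 1]) P
        {X 1 * X 2 - X 0 ^ 2, X 2 ^ ((m0 + 1) / 2) - X 1 ^ ((m0 - 1) / 2)} ∧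
    -- f = x_1^{(m_0+1)/2} − x_0²·x_2^{(m_0−1)/2} lies in P
    (X 1 ^ ((m0 + 1) / 2) - X 0 ^ 2 * X 2 ^ ((m0 - 1) / 2) : MvPolynomial (Fin 3) K) ∈ P ∧
    -- LM(f) = x_1^{(m_0+1)/2}
    IsLM3 (GrevGt3 ![m0, m0 + 1, m0 - 1])
      (X 1 ^ ((m0 + 1) / 2) - X 0 ^ 2 * X 2 ^ ((m0 - 1) / 2) : MvPolynomial (Fin 3) K)
      (Finsupp.single 1 ((m0 + 1) / 2)) ∧
    -- LM(x_1x_2 − x_0²) = x_1x_2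
    IsLM3 (GrevGt3 ![m0, m0 + 1, m0 - 1]) (X 1 * X 2 - X 0 ^ 2 : MvPolynomial (Fin 3) K)
      (Finsupp.single 1 1 + Finsupp.single 2 1) ∧
    -- LM(x_2^{(m_0+1)/2} − x_1^{(m_0−1)/2}) = x_2^{(m_0+1)/2}
    IsLM3 (GrevGt3 ![m0, m0 + 1, m0 - 1])
      (X 2 ^ ((m0 + 1) / 2) - X 1 ^ ((m0 - 1) / 2) : MvPolynomial (Fin 3) K)
      (Finsupp.single 2 ((m0 + 1) / 2)) ∧
    -- x_1^{(m_0+1)/2} is divisible by neither x_1x_2 nor x_2^{(m_0+1)/2}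
    ¬ (Finsupp.single 1 1 + Finsupp.single 2 1 ≤ (Finsupp.single 1 ((m0 + 1) / 2) : Fin 3 →₀ ℕ)) ∧
    ¬ ((Finsupp.single 2 ((m0 + 1) / 2) : Fin 3 →₀ ℕ) ≤ Finsupp.single 1 ((m0 + 1) / 2)) := by
  obtain ⟨c, rfl⟩ := hodd
  rw [show (2 * c + 1 + 1) / 2 = c + 1 by omega, show (2 * c + 1 - 1) / 2 = c by omega]
  have hmem : (X 1 ^ (c + 1) - X 0 ^ 2 * X 2 ^ c : MvPolynomial (Fin 3) K) ∈ P :=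
    hP ▸ X_one_pow_sub_mem_ker c
  have hLMf := isLM3_X_one_pow_sub (K := K) c
  have hLMg₁ := isLM3_X_one_mul_X_two_sub (K := K) c
  have hLMg₂ := isLM3_X_two_pow_sub (K := K) c (by omega)
  have hnle₁ : ¬ (Finsupp.single 1 1 + Finsupp.single 2 1 ≤
      (Finsupp.single 1 (c + 1) : Fin 3 →₀ ℕ)) := fun h => by simpa using h 2
  have hnle₂ : ¬ ((Finsupp.single 2 (c + 1) : Fin 3 →₀ ℕ) ≤ Finsupp.single 1 (c + 1)) :=
    fun h => by simpa using h 2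
  refine ⟨not_isGB3_of_not_le (fun _ _ => GrevGt3.asymm) hmem hLMf ?_, hmem, hLMf, hLMg₁, hLMg₂,
    hnle₁, hnle₂⟩
  rintro g (rfl | rfl)
  exacts [⟨_, hLMg₁, hnle₁⟩, ⟨_, hLMg₂, hnle₂⟩]
end
end

section
/- Let m_0 ≥ 5 be an odd integer. Then min{ b ≥ 1 : b·(m_0−1) ∈ ⟨m_0, m_0+1⟩ } = (m_0+1)/2; that is, ((m_0+1)/2)·(m_0−1) is a nonnegative integer combination of m_0 and m_0+1, and no smaller positive multiple of m_0−1 is. -/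
/-!
An element of `⟨m, m + 1⟩` is `c * m + d * (m + 1) = (c + d) * m + d`, so `n` lies in it exactly
when its remainder mod `m` is at most its quotient. For `1 ≤ b ≤ m` we have
`b * (m - 1) = (b - 1) * m + (m - b)`, so `b * (m - 1) ∈ ⟨m, m + 1⟩` iff `m - b ≤ b - 1`,
i.e. iff `m + 1 ≤ 2 * b`.
-/

namespace Nat

theorem exists_eq_mul_add_mul_succ_iff {m : ℕ} (hm : 0 < m) (n : ℕ) :
    (∃ c d : ℕ, n = c * m + d * (m + 1)) ↔ n % m ≤ n / m := by
  constructor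
  · rintro ⟨c, d, rfl⟩
    have hsplit : c * m + d * (m + 1) = d + m * (c + d) := by ring
    rw [hsplit, Nat.add_mul_div_left _ _ hm, Nat.add_mul_mod_self_left]
    exact (Nat.mod_le d m).trans ((Nat.le_add_left d c).trans (Nat.le_add_left _ _))
  · intro h
    obtain ⟨t, ht⟩ := Nat.exists_eq_add_of_le h
    refine ⟨t, n % m, ?_⟩
    calc n = m * (n / m) + n % m := (Nat.div_add_mod n m).symm
      _ = t * m + n % m * (m + 1) := by rw [ht]; ring

theorem mul_sub_one_eq_sub_add_mul {m b : ℕ} (hb : 1 ≤ b) (hbm : b ≤ m) :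
    b * (m - 1) = (m - b) + m * (b - 1) := by
  obtain ⟨i, rfl⟩ : ∃ i, b = i + 1 := ⟨b - 1, by omega⟩
  obtain ⟨j, rfl⟩ : ∃ j, m = i + 1 + j := ⟨m - (i + 1), by omega⟩
  rw [show i + 1 + j - 1 = i + j by omega, show i + 1 + j - (i + 1) = j by omega, Nat.add_sub_cancel]
  ring

theorem exists_mul_sub_one_eq_iff {m b : ℕ} (hb : 1 ≤ b) (hbm : b ≤ m) :
    (∃ c d : ℕ, b * (m - 1) = c * m + d * (m + 1)) ↔ m + 1 ≤ 2 * b := by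
  have hm : 0 < m := by omega
  have hlt : m - b < m := by omega
  rw [exists_eq_mul_add_mul_succ_iff hm, mul_sub_one_eq_sub_add_mul hb hbm,
    Nat.add_mul_div_left _ _ hm, Nat.add_mul_mod_self_left, Nat.div_eq_of_lt hlt,
    Nat.mod_eq_of_lt hlt]
  omega

end Nat

theorem stmt_6_general (m0 : ℕ) (hodd : Odd m0) :
    -- ((m_0+1)/2)·(m_0−1) is a nonnegative integer combination of m_0 and m_0+1
    (∃ c d : ℕ, ((m0 + 1) / 2) * (m0 - 1) = c * m0 + d * (m0 + 1)) ∧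
    -- and no smaller positive multiple of m_0−1 is
    ∀ b : ℕ, 1 ≤ b → b < (m0 + 1) / 2 →
      ¬∃ c d : ℕ, b * (m0 - 1) = c * m0 + d * (m0 + 1) := by
  obtain ⟨k, rfl⟩ := hodd
  have hhalf : (2 * k + 1 + 1) / 2 = k + 1 := by omega
  refine ⟨(Nat.exists_mul_sub_one_eq_iff (by omega) (by omega)).2 (by omega), ?_⟩
  intro b hb hlt
  rw [Nat.exists_mul_sub_one_eq_iff hb (by omega)]
  omega

theorem stmt_6 (m0 : ℕ) (h5 : 5 ≤ m0) (hodd : Odd m0) :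
    -- ((m_0+1)/2)·(m_0−1) is a nonnegative integer combination of m_0 and m_0+1
    (∃ c d : ℕ, ((m0 + 1) / 2) * (m0 - 1) = c * m0 + d * (m0 + 1)) ∧
    -- and no smaller positive multiple of m_0−1 is
    ∀ b : ℕ, 1 ≤ b → b < (m0 + 1) / 2 →
      ¬∃ c d : ℕ, b * (m0 - 1) = c * m0 + d * (m0 + 1) :=
  stmt_6_general m0 hodd
end

section
/- Let m_0 ≥ 5 be an odd integer. If b ≥ 1 is an integer and b·(m_0−1) = c·m_0 + d·(m_0+1) for some nonnegative integers c and d, then b ≥ (m_0+1)/2. -/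
/-! Reducing `b (m - 1) = c m + d (m + 1)` modulo `m` gives `m ∣ b + d`, and comparing the two sides
gives `d < b`; hence `m ≤ b + d < 2 b`. -/

namespace NumericalSemigroup

variable {m b c d : ℕ}

theorem lt_of_mul_sub_one_eq (hb : 0 < b) (h : b * (m - 1) = c * m + d * (m + 1)) : d < b := by
  refine Nat.lt_of_mul_lt_mul_right (a := m + 1) ?_
  calc d * (m + 1) ≤ b * (m - 1) := by rw [h]; exact Nat.le_add_left _ _
    _ < b * (m + 1) := Nat.mul_lt_mul_of_pos_left (by omega) hb

theorem dvd_add_of_mul_sub_one_eq (hm : 0 < m) (h : b * (m - 1) = c * m + d * (m + 1)) :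
    m ∣ b + d := by
  have hbm : b * m = (c + d) * m + (b + d) := by
    obtain ⟨n, rfl⟩ := Nat.exists_eq_add_of_lt hm
    simp only [zero_add, Nat.add_sub_cancel] at h
    linear_combination h
  exact (Nat.dvd_add_right (dvd_mul_left m (c + d))).mp (hbm ▸ dvd_mul_left m b)

theorem lt_two_mul_of_mul_sub_one_eq (hb : 0 < b) (h : b * (m - 1) = c * m + d * (m + 1)) :
    m < 2 * b := by
  rcases Nat.eq_zero_or_pos m with rfl | hm
  · omega
  calc m ≤ b + d := Nat.le_of_dvd (by omega) (dvd_add_of_mul_sub_one_eq hm h)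
    _ < 2 * b := by have := lt_of_mul_sub_one_eq hb h; omega

end NumericalSemigroup

theorem stmt_7_general (m0 b c d : ℕ) (hb : 1 ≤ b)
    (h : b * (m0 - 1) = c * m0 + d * (m0 + 1)) : (m0 + 1) / 2 ≤ b := by
  have := NumericalSemigroup.lt_two_mul_of_mul_sub_one_eq hb h
  omega

theorem stmt_7 (m0 b c d : ℕ) (h5 : 5 ≤ m0) (hodd : Odd m0) (hb : 1 ≤ b)
    (h : b * (m0 - 1) = c * m0 + d * (m0 + 1)) : (m0 + 1) / 2 ≤ b :=
  stmt_7_general m0 b c d hb h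
end

section
/- Let m_0 ≥ 5 be an odd integer. Then min{ t ≥ 0 : t·(m_0+1) − m_0 ∈ ⟨m_0, m_0+1, m_0−1⟩ } = (m_0+1)/2; that is, ((m_0+1)/2)·(m_0+1) − m_0 is a nonnegative integer combination of m_0, m_0+1 and m_0−1, and t·(m_0+1) − m_0 is not such a combination for any 0 ≤ t < (m_0+1)/2. -/
theorem stmt_8 (m0 : ℕ) (h5 : 5 ≤ m0) (hodd : Odd m0) :
    -- ((m_0+1)/2)·(m_0+1) − m_0 is a nonnegative integer combination of m_0, m_0+1, m_0−1
    (∃ a b c : ℕ, ((m0 + 1) / 2) * (m0 + 1) = a * m0 + b * (m0 + 1) + c * (m0 - 1) + m0) ∧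
    -- and t·(m_0+1) − m_0 is not such a combination for any 0 ≤ t < (m_0+1)/2
    ∀ t : ℕ, t < (m0 + 1) / 2 →
      ¬∃ a b c : ℕ, t * (m0 + 1) = a * m0 + b * (m0 + 1) + c * (m0 - 1) + m0 := by
  obtain ⟨k, hk⟩ := hodd
  subst hk
  have hsub : 2 * k + 1 - 1 = 2 * k := by omega
  have hdiv : (2 * k + 1 + 1) / 2 = k + 1 := by omega
  rw [hsub, hdiv]
  constructor
  · exact ⟨1, 0, k, by ring⟩
  · rintro t ht ⟨a, b, c, heq⟩
    rcases le_or_gt (a + b + c + 1) t with h | h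
    · nlinarith [Nat.mul_le_mul_right (2 * k) h]
    · nlinarith [Nat.mul_le_mul_right (2 * k) h]
end

section
/- Let m_0 ≥ 5 be an odd integer. If t, λ and w are integers with t ≥ 1, λ ≥ 1, w ≥ 1 and t·(m_0+1) = λ·m_0 + w·(m_0−1), then t > (m_0−1)/2. -/
/-- With `k = λ + w - t`, the relation reads `t + w = m k` and `λ = 2t - (m - 1) k`;
positivity of `t + w` forces `k ≥ 1`, whence `2t = λ + (m - 1) k ≥ m`. -/
theorem le_two_mul_of_mul_add_one_eq {m t lam w : ℤ} (hm : 1 ≤ m) (hsum : 0 < t + w)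
    (hlam : 1 ≤ lam) (h : t * (m + 1) = lam * m + w * (m - 1)) : m ≤ 2 * t := by
  set k := lam + w - t
  have hk : t + w = m * k := by linear_combination h
  have hk_pos : 0 < k := pos_of_mul_pos_right (hk ▸ hsum) (by omega)
  have hlam_eq : lam = 2 * t - (m - 1) * k := by linear_combination -hk
  nlinarith [mul_nonneg (sub_nonneg.mpr hm) (sub_nonneg.mpr hk_pos)]

theorem stmt_9_general (m0 t lam w : ℤ) (h5 : 5 ≤ m0)
    (ht : 1 ≤ t) (hlam : 1 ≤ lam) (hw : 1 ≤ w)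
    (h : t * (m0 + 1) = lam * m0 + w * (m0 - 1)) : (m0 - 1) / 2 < t := by
  have hm : m0 ≤ 2 * t := le_two_mul_of_mul_add_one_eq (by omega) (by omega) hlam h
  rw [Int.ediv_lt_iff_lt_mul two_pos]
  omega

theorem stmt_9 (m0 t lam w : ℤ) (h5 : 5 ≤ m0) (hodd : Odd m0)
    (ht : 1 ≤ t) (hlam : 1 ≤ lam) (hw : 1 ≤ w)
    (h : t * (m0 + 1) = lam * m0 + w * (m0 - 1)) : (m0 - 1) / 2 < t :=
  stmt_9_general m0 t lam w h5 ht hlam hw h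
end

section
/- For every i with 1 ≤ i ≤ p, we have m_i − m_0 ∉ Γ. Consequently u > p, and hence q = q_u ≥ 1. -/
/-!
If `m_i - m_0` were `∑ c_j m_j ∈ Γ`, then `c_i = 0` (the sum is smaller than `m_i`), and adding
one to `c_0` would write `m_i` in terms of the other generators, against minimality. Taking
`i = r_u` shows `q_u ≠ 0`, hence `u = q_u p + r_u > p`.
-/

open Finset

section
variable {ι : Type*} {s : Finset ι} {m : ι → ℕ}

lemma pos_of_not_exists_eq_sum {i : ι}
    (hmin : ¬∃ c : ι → ℕ, c i = 0 ∧ m i = ∑ j ∈ s, c j * m j) : 0 < m i :=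
  Nat.pos_of_ne_zero fun h => hmin ⟨0, rfl, by simp [h]⟩

lemma sum_add_single_mul_eq [DecidableEq ι] (c : ι → ℕ) {k : ι} (hk : k ∈ s) :
    ∑ j ∈ s, (c + Pi.single k 1 : ι → ℕ) j * m j = ∑ j ∈ s, c j * m j + m k := by
  simp only [Pi.add_apply, add_mul, sum_add_distrib, Pi.single_apply, ite_mul, one_mul,
    zero_mul, sum_ite_eq', if_pos hk]

lemma coeff_eq_zero_of_eq_sum_add {c : ι → ℕ} {i : ι} (hi : i ∈ s) {d : ℕ} (hd : 0 < d)
    (h : m i = ∑ j ∈ s, c j * m j + d) : c i = 0 := by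
  by_contra hc
  have hle : c i * m i ≤ ∑ j ∈ s, c j * m j :=
    single_le_sum (f := fun j => c j * m j) (fun _ _ => Nat.zero_le _) hi
  have := Nat.le_mul_of_pos_left (m i) (Nat.pos_of_ne_zero hc)
  omega

lemma not_exists_eq_sum_add_generator [DecidableEq ι] {i k : ι} (hi : i ∈ s) (hk : k ∈ s) (hik : i ≠ k)
    (hmin : ¬∃ c : ι → ℕ, c i = 0 ∧ m i = ∑ j ∈ s, c j * m j) (hmk : 0 < m k) :
    ¬∃ c : ι → ℕ, m i = ∑ j ∈ s, c j * m j + m k := by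
  rintro ⟨c, hc⟩
  refine hmin ⟨c + Pi.single k 1, ?_, by rw [sum_add_single_mul_eq c hk, hc]⟩
  simp [coeff_eq_zero_of_eq_sum_add hi hmk hc, hik]

end

theorem stmt_13_general
    -- the almost arithmetic sequence
    (n p : ℕ) (hp : p = n - 1)
    (m : ℕ → ℕ)
    -- the numerical semigroup Γ
    (Γ : Set ℕ)
    (hΓ : Γ = {γ | ∃ c : ℕ → ℕ, γ = ∑ i ∈ Finset.range (n + 1), c i * m i})
    -- Γ is minimally generated by m_0, …, m_n
    (hmin : ∀ i ≤ n, ¬∃ c : ℕ → ℕ, c i = 0 ∧ m i = ∑ j ∈ Finset.range (n + 1), c j * m j)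
    -- u = min{t ≥ 0 : g_t − m_0 ∈ Γ}, with u = q·p + r, 1 ≤ r ≤ p, g_u = q·m_p + m_r
    (u q r : ℕ) (hu : u = q * p + r) (hr1 : 1 ≤ r) (hrp : r ≤ p)
    (humem : ∃ γ ∈ Γ, q * m p + m r = γ + m 0) :
    -- m_i − m_0 ∉ Γ for 1 ≤ i ≤ p; consequently u > p, and hence q = q_u ≥ 1
    (∀ i : ℕ, 1 ≤ i → i ≤ p → ¬∃ γ ∈ Γ, m i = γ + m 0) ∧ p < u ∧ 1 ≤ q := by
  have hm0 : 0 < m 0 := pos_of_not_exists_eq_sum (hmin 0 (Nat.zero_le n))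
  have hgap : ∀ i : ℕ, 1 ≤ i → i ≤ p → ¬∃ γ ∈ Γ, m i = γ + m 0 := by
    rintro i hi hip ⟨γ, hγ, heq⟩
    rw [hΓ] at hγ
    obtain ⟨c, rfl⟩ := hγ
    exact not_exists_eq_sum_add_generator (mem_range.2 (by omega)) (mem_range.2 (by omega))
      (by omega) (hmin i (by omega)) hm0 ⟨c, heq⟩
  have hq : 1 ≤ q :=
    Nat.one_le_iff_ne_zero.2 fun hq0 => hgap r hr1 hrp (by simpa [hq0] using humem)
  have hpq : p ≤ q * p := Nat.le_mul_of_pos_left p hq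
  exact ⟨hgap, by omega, hq⟩

theorem stmt_13
    -- the almost arithmetic sequence
    (n p : ℕ) (hn : 2 ≤ n) (hp : p = n - 1)
    (m : ℕ → ℕ) (hmpos : ∀ i ≤ n, 0 < m i)
    (dst : ℕ) (hdst : 0 < dst)
    (harith : ∀ i ≤ p, m i = m 0 + i * dst)
    (hgcd : (Finset.range (n + 1)).gcd m = 1)
    -- the numerical semigroup Γ
    (Γ : Set ℕ)
    (hΓ : Γ = {γ | ∃ c : ℕ → ℕ, γ = ∑ i ∈ Finset.range (n + 1), c i * m i})
    -- Γ is minimally generated by m_0, …, m_n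
    (hmin : ∀ i ≤ n, ¬∃ c : ℕ → ℕ, c i = 0 ∧ m i = ∑ j ∈ Finset.range (n + 1), c j * m j)
    -- u = min{t ≥ 0 : g_t − m_0 ∈ Γ}, with u = q·p + r, 1 ≤ r ≤ p, g_u = q·m_p + m_r
    (u q r : ℕ) (hu : u = q * p + r) (hr1 : 1 ≤ r) (hrp : r ≤ p)
    (humem : ∃ γ ∈ Γ, q * m p + m r = γ + m 0)
    (humin : ∀ t qt rt : ℕ, t < u → t = qt * p + rt → 1 ≤ rt → rt ≤ p →
        ¬∃ γ ∈ Γ, qt * m p + m rt = γ + m 0) :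
    -- m_i − m_0 ∉ Γ for 1 ≤ i ≤ p; consequently u > p, and hence q = q_u ≥ 1
    (∀ i : ℕ, 1 ≤ i → i ≤ p → ¬∃ γ ∈ Γ, m i = γ + m 0) ∧ p < u ∧ 1 ≤ q :=
  stmt_13_general n p hp m Γ hΓ hmin u q r hu hr1 hrp humem
end

section
/- Let m_0 ≥ 5 be an odd integer. Then the set G = { x_1^{(m_0+1)/2} − x_0^2·x_2^{(m_0−1)/2} , x_1·x_2 − x_0^2 , x_2^{(m_0+1)/2} − x_1^{(m_0−1)/2} } is the reduced Gröbner basis of the toric ideal P of the sequence (m_0, m_0+1, m_0−1) with respect to the grevlex order with grading wt(x_i) = m_i and x_0 < x_1 < x_2: G is a Gröbner basis of P, every element of G has leading coefficient 1 (the leading monomials being x_1^{(m_0+1)/2}, x_1·x_2 and x_2^{(m_0+1)/2} respectively), and no monomial appearing in any element of G is divisible by the leading monomial of a different element of G. -/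
open MvPolynomial

noncomputable section

variable {K : Type*} [Field K]

/-! Write `m₀ = 2r + 1`. The three binomials lie in `P` because their two terms have the same
weight, and they are monic with the claimed leading terms once `r ≥ 1`. Since `η(x^e) = t^{wt e}`,
every monomial of some `f ∈ P` shares its weight with another monomial of `f`. Write the weight of
`x^e` as `(2r+1)·deg e + (e₁ - e₂)`. A monomial divisible by none of `x₁^{r+1}`, `x₁x₂`,
`x₂^{r+1}` is `x₀^a x₁^b` or `x₀^a x₂^c` with `b, c ≤ r`; such a monomial has the largest
`x₀`-exponent in its weight class, and a divisibility argument shows it also has the largest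
`x₁`-exponent among those. So it is the grevlex-smallest monomial of its weight and cannot be the
leading monomial of an element of `P`. -/

section GrevOrder

/-- Grevlex as the lexicographic order on (weight, exponent vector under the reversed
lexicographic order). -/
def grevKey (m : Fin 3 → ℕ) (a : Fin 3 →₀ ℕ) : ℕ ×ₗ (Lex (Fin 3 → ℕ))ᵒᵈ :=
  toLex (wt3 m a, OrderDual.toDual (toLex ⇑a))

variable {m : Fin 3 → ℕ}

theorem grevGt3_iff_grevKey_lt {a b : Fin 3 →₀ ℕ} :
    GrevGt3 m a b ↔ grevKey m b < grevKey m a := by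
  rw [grevKey, grevKey, Prod.Lex.toLex_lt_toLex, OrderDual.toDual_lt_toDual, GrevGt3, eq_comm]
  exact or_congr_right (and_congr_right fun _ => exists_congr fun _ => and_comm)

theorem grevKey_injective : Function.Injective (grevKey m) := fun a b h => by
  simp only [grevKey, toLex_inj, Prod.mk.injEq, OrderDual.toDual_inj, DFunLike.coe_fn_eq] at h
  exact h.2

theorem IsLM3.eq {f : MvPolynomial (Fin 3) K} {d d' : Fin 3 →₀ ℕ}
    (h : IsLM3 (GrevGt3 m) f d) (h' : IsLM3 (GrevGt3 m) f d') : d = d' := by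
  by_contra hne
  exact lt_asymm (grevGt3_iff_grevKey_lt.1 (h.2 d' h'.1 (Ne.symm hne)))
    (grevGt3_iff_grevKey_lt.1 (h'.2 d h.1 hne))

theorem exists_isLM3 {f : MvPolynomial (Fin 3) K} (hf : f ≠ 0) :
    ∃ d, IsLM3 (GrevGt3 m) f d := by
  obtain ⟨d, hd, hmax⟩ := f.support.exists_max_image (grevKey m) (support_nonempty.2 hf)
  exact ⟨d, hd, fun e he hne =>
    grevGt3_iff_grevKey_lt.2 ((hmax e he).lt_of_ne (grevKey_injective.ne hne))⟩

end GrevOrder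

theorem isLM3_of_support_eq_pair {gt : (Fin 3 →₀ ℕ) → (Fin 3 →₀ ℕ) → Prop}
    {f : MvPolynomial (Fin 3) K} {d e : Fin 3 →₀ ℕ} (hf : f.support = {d, e}) (hde : gt d e) :
    IsLM3 gt f d := by
  refine ⟨by simp [hf], fun e' he' hne => ?_⟩
  rw [hf, Finset.mem_insert, Finset.mem_singleton] at he'
  rwa [he'.resolve_left hne]

theorem support_monomial_sub_monomial {σ R : Type*} [DecidableEq σ] [CommRing R] [Nontrivial R]
    {d e : σ →₀ ℕ} (h : d ≠ e) :
    (monomial d (1 : R) - monomial e 1).support = {d, e} := by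
  ext a
  rcases eq_or_ne a d with rfl | had
  · simp [coeff_monomial, Ne.symm h]
  rcases eq_or_ne a e with rfl | hae
  · simp [coeff_monomial, had, Ne.symm had]
  · simp [coeff_monomial, had, hae, Ne.symm had, Ne.symm hae]

theorem aeval_X_pow_eq_sum (m : Fin 3 → ℕ) (f : MvPolynomial (Fin 3) K) :
    aeval (fun i => (Polynomial.X : Polynomial K) ^ m i) f
      = ∑ a ∈ f.support, Polynomial.monomial (wt3 m a) (coeff a f) := by
  conv_lhs => rw [f.as_sum, map_sum]
  refine Finset.sum_congr rfl fun a _ => ?_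
  simp [aeval_monomial, Finsupp.prod_fintype, ← pow_mul, Finset.prod_pow_eq_pow_sum, wt3,
    Polynomial.C_mul_X_pow_eq_monomial, mul_comm]

theorem exists_wt3_eq_of_aeval_eq_zero {m : Fin 3 → ℕ} {f : MvPolynomial (Fin 3) K}
    (hf : aeval (fun i => (Polynomial.X : Polynomial K) ^ m i) f = 0)
    {d : Fin 3 →₀ ℕ} (hd : d ∈ f.support) : ∃ e ∈ f.support, e ≠ d ∧ wt3 m e = wt3 m d := by
  by_contra! h
  have := congrArg (Polynomial.coeff · (wt3 m d)) ((aeval_X_pow_eq_sum m f).symm.trans hf)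
  simp only [Polynomial.finsetSum_coeff, Polynomial.coeff_monomial, Polynomial.coeff_zero] at this
  rw [Finset.sum_eq_single d (fun e he hne => if_neg (h e he hne)) (absurd hd), if_pos rfl] at this
  exact mem_support_iff.1 hd this

namespace ToricGrobner

open Finsupp (single)

variable (r : ℕ)

/-- The weights `(m₀, m₀ + 1, m₀ - 1)` for `m₀ = 2r + 1`. -/
def weights : Fin 3 → ℕ := ![2 * r + 1, 2 * r + 2, 2 * r]

def lead : Fin 3 → Fin 3 →₀ ℕ := ![single 1 (r + 1), single 1 1 + single 2 1, single 2 (r + 1)]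

def tail : Fin 3 → Fin 3 →₀ ℕ := ![single 0 2 + single 2 r, single 0 2, single 1 r]

def binomial (i : Fin 3) : MvPolynomial (Fin 3) K := monomial (lead r i) 1 - monomial (tail r i) 1

def IsStandard (a : Fin 3 →₀ ℕ) : Prop := a 1 ≤ r ∧ a 2 ≤ r ∧ (a 1 = 0 ∨ a 2 = 0)

variable {r}

theorem wt3_weights (a : Fin 3 →₀ ℕ) :
    wt3 (weights r) a = (2 * r + 1) * a 0 + (2 * r + 2) * a 1 + 2 * r * a 2 := by
  simp [wt3, weights, Fin.sum_univ_three]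

theorem wt3_lead (i : Fin 3) : wt3 (weights r) (lead r i) = wt3 (weights r) (tail r i) := by
  fin_cases i <;>
    simp only [wt3_weights, lead, tail, Fin.zero_eta, Fin.mk_one, Fin.reduceFinMk, Matrix.cons_val,
      Finsupp.coe_add, Pi.add_apply, Finsupp.single_apply, Fin.reduceEq, if_true, if_false] <;>
    ring

theorem lead_ne_tail (i : Fin 3) : lead r i ≠ tail r i := fun h => by
  have h1 := DFunLike.congr_fun h 1
  have h2 := DFunLike.congr_fun h 2
  fin_cases i <;> simp [lead, tail] at h1 h2

theorem grevGt3_lead_tail (hr : 0 < r) (i : Fin 3) :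
    GrevGt3 (weights r) (lead r i) (tail r i) := by
  refine Or.inr ⟨wt3_lead i, ?_⟩
  fin_cases i
  · exact ⟨0, by simp [lead, tail], fun j hj => absurd hj (Fin.not_lt_zero j)⟩
  · exact ⟨0, by simp [lead, tail], fun j hj => absurd hj (Fin.not_lt_zero j)⟩
  · exact ⟨1, by simp [lead, tail, hr], by simp [lead, tail]⟩

theorem support_binomial (i : Fin 3) :
    (binomial r i : MvPolynomial (Fin 3) K).support = {lead r i, tail r i} :=
  support_monomial_sub_monomial (lead_ne_tail i)

theorem coeff_lead_binomial (i : Fin 3) :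
    coeff (lead r i) (binomial r i : MvPolynomial (Fin 3) K) = 1 := by
  simp [binomial, coeff_monomial, Ne.symm (lead_ne_tail i)]

theorem binomial_ne_zero (i : Fin 3) : (binomial r i : MvPolynomial (Fin 3) K) ≠ 0 := fun h => by
  simpa [h] using coeff_lead_binomial (K := K) (r := r) i

theorem isLM3_binomial (hr : 0 < r) (i : Fin 3) :
    IsLM3 (GrevGt3 (weights r)) (binomial r i : MvPolynomial (Fin 3) K) (lead r i) :=
  isLM3_of_support_eq_pair (support_binomial i) (grevGt3_lead_tail hr i)

theorem aeval_binomial (i : Fin 3) :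
    aeval (fun j => (Polynomial.X : Polynomial K) ^ weights r j)
      (binomial r i : MvPolynomial (Fin 3) K) = 0 := by
  rw [aeval_X_pow_eq_sum, support_binomial, Finset.sum_pair (lead_ne_tail i), wt3_lead]
  simp [binomial, coeff_monomial, lead_ne_tail i, Ne.symm (lead_ne_tail i)]

theorem binomial_zero :
    (binomial r 0 : MvPolynomial (Fin 3) K) = X 1 ^ (r + 1) - X 0 ^ 2 * X 2 ^ r := by
  simp [binomial, lead, tail, X_pow_eq_monomial, monomial_mul]

theorem binomial_one : (binomial r 1 : MvPolynomial (Fin 3) K) = X 1 * X 2 - X 0 ^ 2 := by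
  rw [X_pow_eq_monomial]
  simp [binomial, lead, tail, X, monomial_mul]

theorem binomial_two :
    (binomial r 2 : MvPolynomial (Fin 3) K) = X 2 ^ (r + 1) - X 1 ^ r := by
  simp [binomial, lead, tail, X_pow_eq_monomial]

theorem isStandard_iff_forall_not_lead_le {a : Fin 3 →₀ ℕ} :
    IsStandard r a ↔ ∀ i, ¬ lead r i ≤ a := by
  simp [IsStandard, Fin.forall_fin_succ, lead, Finsupp.le_def, or_iff_not_imp_left,
    Nat.one_le_iff_ne_zero, and_comm]

/-- With `k` the difference of degrees, `(2r+1) k = (b₁ - b₂) - (a₁ - a₂)`; a standard `a` has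
`a₀ = deg a - |a₁ - a₂|` with `|a₁ - a₂| ≤ r`, while `b₀ ≤ deg b - |b₁ - b₂|`. -/
theorem apply_zero_le_of_isStandard {a b : Fin 3 →₀ ℕ} (ha : IsStandard r a)
    (hw : wt3 (weights r) b = wt3 (weights r) a) : b 0 ≤ a 0 := by
  obtain ⟨ha1, ha2, ha12⟩ := ha
  rw [wt3_weights, wt3_weights] at hw
  zify at *
  obtain ⟨k, hk⟩ : ∃ k : ℤ, k = (a 0 + a 1 + a 2 : ℤ) - (b 0 + b 1 + b 2) := ⟨_, rfl⟩
  have hk' : (2 * r + 1) * k = (b 1 - b 2 : ℤ) - (a 1 - a 2) := by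
    rw [hk]
    linear_combination (-1 : ℤ) * hw
  rcases lt_trichotomy k 0 with hk0 | rfl | hk0
  · nlinarith
  · rcases ha12 with h | h <;> omega
  · nlinarith

/-- Equal weights and `x₀`-exponents give `(r+1)(b₁ - a₁) = r(a₂ - b₂)`, so `r ∣ b₁ - a₁`, which
forces `a₂ > r` if `b₁ > a₁`. -/
theorem apply_one_le_of_isStandard {a b : Fin 3 →₀ ℕ} (ha : IsStandard r a)
    (hw : wt3 (weights r) b = wt3 (weights r) a) (h0 : b 0 = a 0) : b 1 ≤ a 1 := by
  by_contra! h1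
  obtain ⟨x, hx⟩ := Nat.exists_eq_add_of_lt h1
  have hwx : r * a 2 = r * (x + 1 + b 2) + (x + 1) := by
    rw [wt3_weights, wt3_weights, h0, hx] at hw
    linarith
  have hrx : r ∣ x + 1 := (Nat.dvd_add_right (dvd_mul_right r _)).1 (hwx ▸ dvd_mul_right r _)
  have := Nat.le_of_dvd x.succ_pos hrx
  nlinarith [ha.2.1]

theorem apply_two_eq_of_wt3_eq (hr : 0 < r) {a b : Fin 3 →₀ ℕ}
    (hw : wt3 (weights r) b = wt3 (weights r) a) (h0 : b 0 = a 0) (h1 : b 1 = a 1) :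
    b 2 = a 2 := by
  rw [wt3_weights, wt3_weights, h0, h1] at hw
  exact Nat.eq_of_mul_eq_mul_left (by omega : 0 < 2 * r) (by omega)

theorem grevKey_lt_of_isStandard (hr : 0 < r) {a b : Fin 3 →₀ ℕ} (ha : IsStandard r a)
    (hw : wt3 (weights r) b = wt3 (weights r) a) (hne : b ≠ a) :
    grevKey (weights r) a < grevKey (weights r) b := by
  rw [grevKey, grevKey, Prod.Lex.toLex_lt_toLex, hw, OrderDual.toDual_lt_toDual]
  refine Or.inr ⟨rfl, lt_of_le_of_ne (not_lt.1 fun ⟨i, hpre, hi⟩ => ?_) (by simpa using hne)⟩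
  simp only [Pi.toLex_apply] at hpre hi
  have h0 := apply_zero_le_of_isStandard ha hw
  fin_cases i <;> simp only [Fin.zero_eta, Fin.mk_one, Fin.reduceFinMk] at hi
  · omega
  · have := apply_one_le_of_isStandard ha hw (hpre 0 (by decide)).symm
    omega
  · have := apply_two_eq_of_wt3_eq hr hw (hpre 0 (by decide)).symm (hpre 1 (by decide)).symm
    omega

theorem exists_lead_le_of_isLM3 (hr : 0 < r) {f : MvPolynomial (Fin 3) K}
    (hf : aeval (fun j => (Polynomial.X : Polynomial K) ^ weights r j) f = 0)
    {d : Fin 3 →₀ ℕ} (hd : IsLM3 (GrevGt3 (weights r)) f d) : ∃ i, lead r i ≤ d := by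
  by_contra! h
  obtain ⟨e, he, hne, hw⟩ := exists_wt3_eq_of_aeval_eq_zero hf hd.1
  exact lt_asymm (grevGt3_iff_grevKey_lt.1 (hd.2 e he hne))
    (grevKey_lt_of_isStandard hr (isStandard_iff_forall_not_lead_le.2 h) hw hne)

theorem isStandard_tail (i : Fin 3) : IsStandard r (tail r i) := by
  fin_cases i <;> simp [IsStandard, tail]

theorem lead_le_lead_iff (hr : 0 < r) {i j : Fin 3} : lead r i ≤ lead r j ↔ i = j := by
  fin_cases i <;> fin_cases j <;> simp [lead, Finsupp.le_def, Fin.forall_fin_succ, hr.ne']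

theorem not_lead_le_of_mem_support (hr : 0 < r) {i j : Fin 3} (hij : i ≠ j) {d : Fin 3 →₀ ℕ}
    (hd : d ∈ (binomial r j : MvPolynomial (Fin 3) K).support) : ¬ lead r i ≤ d := by
  rw [support_binomial, Finset.mem_insert, Finset.mem_singleton] at hd
  rcases hd with rfl | rfl
  · exact fun h => hij ((lead_le_lead_iff hr).1 h)
  · exact isStandard_iff_forall_not_lead_le.1 (isStandard_tail j) i

theorem isGB3_range_binomial (hr : 0 < r) :
    IsGB3 (GrevGt3 (weights r))
      (RingHom.ker (aeval (fun j => (Polynomial.X : Polynomial K) ^ weights r j) :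
        MvPolynomial (Fin 3) K →ₐ[K] Polynomial K))
      (Set.range (binomial r)) := by
  refine ⟨?_, ?_, fun f hf hf0 => ?_⟩
  · rintro _ ⟨i, rfl⟩
    exact aeval_binomial i
  · rintro _ ⟨i, rfl⟩
    exact binomial_ne_zero i
  · obtain ⟨d, hd⟩ := exists_isLM3 hf0
    obtain ⟨i, hi⟩ := exists_lead_le_of_isLM3 hr hf hd
    exact ⟨_, ⟨i, rfl⟩, _, _, isLM3_binomial hr i, hd, hi⟩

theorem range_binomial :
    Set.range (binomial r) =
      ({binomial r 0, binomial r 1, binomial r 2} : Set (MvPolynomial (Fin 3) K)) := by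
  ext
  simp [Fin.exists_fin_succ, eq_comm]

end ToricGrobner

open ToricGrobner in
theorem stmt_16 (m0 : ℕ) (h5 : 5 ≤ m0) (hodd : Odd m0)
    -- the toric ideal P of the sequence (m_0, m_0+1, m_0−1)
    (P : Ideal (MvPolynomial (Fin 3) K))
    (hP : P = RingHom.ker
        (MvPolynomial.aeval (fun i : Fin 3 => (Polynomial.X : Polynomial K) ^ ![m0, m0 + 1, m0 - 1] i) :
          MvPolynomial (Fin 3) K →ₐ[K] Polynomial K))
    -- G = {x_1^{(m_0+1)/2} − x_0²·x_2^{(m_0−1)/2}, x_1x_2 − x_0², x_2^{(m_0+1)/2} − x_1^{(m_0−1)/2}}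
    (G : Set (MvPolynomial (Fin 3) K))
    (hG : G = {X 1 ^ ((m0 + 1) / 2) - X 0 ^ 2 * X 2 ^ ((m0 - 1) / 2),
               X 1 * X 2 - X 0 ^ 2,
               X 2 ^ ((m0 + 1) / 2) - X 1 ^ ((m0 - 1) / 2)}) :
    -- G is a Gröbner basis of P
    IsGB3 (GrevGt3 ![m0, m0 + 1, m0 - 1]) P G ∧
    -- with leading monomials x_1^{(m_0+1)/2}, x_1x_2, x_2^{(m_0+1)/2} and all leading
    -- coefficients equal to 1
    (IsLM3 (GrevGt3 ![m0, m0 + 1, m0 - 1])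
        (X 1 ^ ((m0 + 1) / 2) - X 0 ^ 2 * X 2 ^ ((m0 - 1) / 2) : MvPolynomial (Fin 3) K)
        (Finsupp.single 1 ((m0 + 1) / 2)) ∧
      MvPolynomial.coeff (Finsupp.single 1 ((m0 + 1) / 2))
        (X 1 ^ ((m0 + 1) / 2) - X 0 ^ 2 * X 2 ^ ((m0 - 1) / 2) : MvPolynomial (Fin 3) K) = 1) ∧
    (IsLM3 (GrevGt3 ![m0, m0 + 1, m0 - 1]) (X 1 * X 2 - X 0 ^ 2 : MvPolynomial (Fin 3) K)
        (Finsupp.single 1 1 + Finsupp.single 2 1) ∧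
      MvPolynomial.coeff (Finsupp.single 1 1 + Finsupp.single 2 1)
        (X 1 * X 2 - X 0 ^ 2 : MvPolynomial (Fin 3) K) = 1) ∧
    (IsLM3 (GrevGt3 ![m0, m0 + 1, m0 - 1])
        (X 2 ^ ((m0 + 1) / 2) - X 1 ^ ((m0 - 1) / 2) : MvPolynomial (Fin 3) K)
        (Finsupp.single 2 ((m0 + 1) / 2)) ∧
      MvPolynomial.coeff (Finsupp.single 2 ((m0 + 1) / 2))
        (X 2 ^ ((m0 + 1) / 2) - X 1 ^ ((m0 - 1) / 2) : MvPolynomial (Fin 3) K) = 1) ∧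
    -- G is reduced: no monomial appearing in an element of G is divisible by the leading
    -- monomial of a different element of G
    (∀ f ∈ G, ∀ d ∈ f.support, ∀ g ∈ G, g ≠ f →
      ∀ dg, IsLM3 (GrevGt3 ![m0, m0 + 1, m0 - 1]) g dg → ¬ dg ≤ d) := by
  obtain ⟨r, rfl⟩ := hodd
  have hr : 0 < r := by omega
  have hwts : ![2 * r + 1, 2 * r + 1 + 1, 2 * r + 1 - 1] = weights r := by simp [weights]
  subst hP hG
  rw [hwts, show (2 * r + 1 + 1) / 2 = r + 1 by omega, show (2 * r + 1 - 1) / 2 = r by omega,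
    ← binomial_zero, ← binomial_one (r := r), ← binomial_two, ← range_binomial]
  refine ⟨isGB3_range_binomial hr, ⟨isLM3_binomial hr 0, coeff_lead_binomial 0⟩,
    ⟨isLM3_binomial hr 1, coeff_lead_binomial 1⟩, ⟨isLM3_binomial hr 2, coeff_lead_binomial 2⟩, ?_⟩
  rintro _ ⟨j, rfl⟩ d hd _ ⟨i, rfl⟩ hij dg hdg
  rw [hdg.eq (isLM3_binomial hr i)]
  exact not_lead_le_of_mem_support hr (fun h => hij (congrArg (binomial r) h)) hd

end
end
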